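/- arXiv:2304.10522 — 4 statements merged into one kernel-verified Lean document; each statement's English description precedes it below -/
import Mathlib

section
/- Let p > 2 be a prime, let d > 1 be a divisor of p-1, and let n ≥ 1. Then L_{n,p,d} equals the intersection of all normal subgroups N of F_n such that the quotient F_n/N lies in Ab(p)∗Ab(d). -/
/-!
Write `K = ⁅F, F⁆ · F^d` and `L = ⁅K, K⁆ · K^p`. If `F ⧸ N` lies in `Ab(p) ∗ Ab(d)` with witness
`M`, then `K` maps into `M`, and since `M` is abelian of exponent `p`, `L` maps to `1`; so
`L ≤ N`. Conversely `F ⧸ L` lies in the class, with witness the image of `K`. It is finite since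
`F ⧸ K` and `K ⧸ L` are finitely generated abelian groups of finite exponent, `K` being finitely
generated by Schreier's lemma.
-/

/-- `subgroupPow m K` is the subgroup generated by all `m`-th powers of elements of `K`. -/
def subgroupPow {G : Type*} [Group G] (m : ℕ) (K : Subgroup G) : Subgroup G :=
  Subgroup.closure {x | ∃ u ∈ K, u ^ m = x}

/-- `Kgen n m = [F_n, F_n] · pow_m(F_n)`. -/
def Kgen (n m : ℕ) : Subgroup (FreeGroup (Fin n)) :=
  ⁅(⊤ : Subgroup (FreeGroup (Fin n))), (⊤ : Subgroup (FreeGroup (Fin n)))⁆ ⊔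
    subgroupPow m (⊤ : Subgroup (FreeGroup (Fin n)))

/-- `Lgen n p d = [K_{n,d}, K_{n,d}] · pow_p(K_{n,d})`. -/
def Lgen (n p d : ℕ) : Subgroup (FreeGroup (Fin n)) :=
  ⁅Kgen n d, Kgen n d⁆ ⊔ subgroupPow p (Kgen n d)

open scoped commutatorElement

/-- A group `G` lies in `Ab(p) ∗ Ab(d)` if it is finite and has a normal subgroup `N` that is
abelian of exponent dividing `p`, with `G/N` abelian of exponent dividing `d`. -/
def InAbStar (p d : ℕ) (G : Type*) [Group G] : Prop :=
  Finite G ∧ ∃ N : Subgroup G, N.Normal ∧ (∀ a ∈ N, ∀ b ∈ N, a * b = b * a) ∧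
    (∀ a ∈ N, a ^ p = 1) ∧ (∀ g h : G, ⁅g, h⁆ ∈ N) ∧ (∀ g : G, g ^ d ∈ N)

section CommSupPow

variable {G : Type*} [Group G] {m : ℕ} {K H : Subgroup G}

lemma pow_mem_subgroupPow {u : G} (hu : u ∈ K) : u ^ m ∈ subgroupPow m K :=
  Subgroup.subset_closure ⟨u, hu, rfl⟩

lemma subgroupPow_le_iff : subgroupPow m K ≤ H ↔ ∀ u ∈ K, u ^ m ∈ H := by
  refine ⟨fun h u hu => h (pow_mem_subgroupPow hu), fun h => ?_⟩
  rw [subgroupPow, Subgroup.closure_le]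
  rintro _ ⟨u, hu, rfl⟩
  exact h u hu

instance subgroupPow_normal [hK : K.Normal] : (subgroupPow m K).Normal := by
  rw [← Subgroup.normalizer_eq_top_iff, eq_top_iff, subgroupPow, Subgroup.le_normalizer_closure_iff]
  rintro g - _ ⟨u, hu, rfl⟩
  rw [← conj_pow]
  exact Subgroup.subset_closure ⟨g * u * g⁻¹, hK.conj_mem u hu g, rfl⟩

variable (m K) in
def commSupPow : Subgroup G := ⁅K, K⁆ ⊔ subgroupPow m K

lemma commSupPow_le_iff :
    commSupPow m K ≤ H ↔ (∀ a ∈ K, ∀ b ∈ K, ⁅a, b⁆ ∈ H) ∧ ∀ a ∈ K, a ^ m ∈ H := by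
  rw [commSupPow, sup_le_iff, Subgroup.commutator_le, subgroupPow_le_iff]

lemma commutatorElement_mem_commSupPow {a b : G} (ha : a ∈ K) (hb : b ∈ K) :
    ⁅a, b⁆ ∈ commSupPow m K :=
  Subgroup.mem_sup_left (Subgroup.commutator_mem_commutator ha hb)

lemma pow_mem_commSupPow {a : G} (ha : a ∈ K) : a ^ m ∈ commSupPow m K :=
  Subgroup.mem_sup_right (pow_mem_subgroupPow ha)

instance commSupPow_normal [K.Normal] : (commSupPow m K).Normal := by
  unfold commSupPow
  infer_instance

lemma commSupPow_le_self : commSupPow m K ≤ K :=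
  sup_le K.commutator_le_self (subgroupPow_le_iff.mpr fun _ ha => K.pow_mem ha m)

variable (G) in
open scoped IsMulCommutative in
lemma index_commSupPow_top_ne_zero [Group.FG G] (hm : m ≠ 0) :
    (commSupPow m (⊤ : Subgroup G)).index ≠ 0 := by
  set N := commSupPow m (⊤ : Subgroup G)
  have : IsMulCommutative (G ⧸ N) :=
    Subgroup.Normal.quotient_commutative_iff_commutator_le.mpr le_sup_left
  have : Group.FG (G ⧸ N) := Group.fg_of_surjective (QuotientGroup.mk'_surjective N)
  have hexp : Monoid.ExponentExists (G ⧸ N) := ⟨m, Nat.pos_of_ne_zero hm, ?_⟩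
  · have := CommGroup.finite_of_fg_isMulTorsion (G ⧸ N) (ExponentExists.isMulTorsion hexp)
    exact Subgroup.index_ne_zero_of_finite
  · rintro ⟨g⟩
    exact (QuotientGroup.eq_one_iff _).mpr (pow_mem_commSupPow (Subgroup.mem_top g))

lemma commSupPow_top_le_subgroupOf :
    commSupPow m (⊤ : Subgroup K) ≤ (commSupPow m K).subgroupOf K :=
  commSupPow_le_iff.mpr ⟨fun a _ b _ => commutatorElement_mem_commSupPow a.2 b.2,
    fun a _ => pow_mem_commSupPow a.2⟩

lemma index_commSupPow_ne_zero [Group.FG G] (hm : m ≠ 0) (hK : K.index ≠ 0) :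
    (commSupPow m K).index ≠ 0 := by
  have : K.FiniteIndex := ⟨hK⟩
  have hrel : (commSupPow m K).relIndex K ≠ 0 :=
    ne_zero_of_dvd_ne_zero (index_commSupPow_top_ne_zero K hm)
      (Subgroup.index_dvd_of_le commSupPow_top_le_subgroupOf)
  rw [← Subgroup.relIndex_mul_index commSupPow_le_self]
  exact mul_ne_zero hrel hK

end CommSupPow

section InAbStar

variable {G : Type*} [Group G] {p d : ℕ}

lemma commSupPow_commSupPow_le_of_inAbStar {N : Subgroup G} [N.Normal]
    (h : InAbStar p d (G ⧸ N)) : commSupPow p (commSupPow d (⊤ : Subgroup G)) ≤ N := by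
  obtain ⟨-, M, -, hM_comm, hM_pow_p, hM_commutator, hM_pow_d⟩ := h
  have hK : commSupPow d (⊤ : Subgroup G) ≤ M.comap (QuotientGroup.mk' N) :=
    commSupPow_le_iff.mpr ⟨fun a _ b _ => by
      simpa only [Subgroup.mem_comap, map_commutatorElement] using hM_commutator _ _,
      fun a _ => by simpa only [Subgroup.mem_comap, map_pow] using hM_pow_d _⟩
  rw [← QuotientGroup.ker_mk' N, commSupPow_le_iff]
  refine ⟨fun a ha b hb => ?_, fun a ha => ?_⟩
  · rw [MonoidHom.mem_ker, map_commutatorElement, commutatorElement_eq_one_iff_mul_comm]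
    exact hM_comm _ (hK ha) _ (hK hb)
  · rw [MonoidHom.mem_ker, map_pow]
    exact hM_pow_p _ (hK ha)

lemma inAbStar_quotient_commSupPow [Group.FG G] (hp : p ≠ 0) (hd : d ≠ 0) :
    InAbStar p d (G ⧸ commSupPow p (commSupPow d (⊤ : Subgroup G))) := by
  set K := commSupPow d (⊤ : Subgroup G)
  set L := commSupPow p K
  have : L.FiniteIndex :=
    ⟨index_commSupPow_ne_zero hp (index_commSupPow_ne_zero hd (by simp))⟩
  have hπ := QuotientGroup.mk'_surjective L
  refine ⟨inferInstance, K.map (QuotientGroup.mk' L), Subgroup.Normal.map inferInstance _ hπ,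
    ?_, ?_, fun x y => ?_, fun x => ?_⟩
  · rintro _ ⟨a, ha, rfl⟩ _ ⟨b, hb, rfl⟩
    rw [← commutatorElement_eq_one_iff_mul_comm, ← map_commutatorElement]
    exact (QuotientGroup.eq_one_iff _).mpr (commutatorElement_mem_commSupPow ha hb)
  · rintro _ ⟨a, ha, rfl⟩
    rw [← map_pow]
    exact (QuotientGroup.eq_one_iff _).mpr (pow_mem_commSupPow ha)
  · obtain ⟨a, rfl⟩ := hπ x
    obtain ⟨b, rfl⟩ := hπ y
    rw [← map_commutatorElement]
    exact Subgroup.mem_map_of_mem _ (commutatorElement_mem_commSupPow trivial trivial)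
  · obtain ⟨a, rfl⟩ := hπ x
    rw [← map_pow]
    exact Subgroup.mem_map_of_mem _ (pow_mem_commSupPow trivial)

end InAbStar

lemma Lgen_eq_commSupPow (n p d : ℕ) :
    Lgen n p d = commSupPow p (commSupPow d (⊤ : Subgroup (FreeGroup (Fin n)))) :=
  rfl

theorem stmt_2_general (p d n : ℕ) (hp : p.Prime) (hd : 1 < d) :
    Lgen n p d = sInf {N : Subgroup (FreeGroup (Fin n)) |
      ∃ hN : N.Normal, letI := hN; InAbStar p d (FreeGroup (Fin n) ⧸ N)} := by
  rw [Lgen_eq_commSupPow]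
  refine le_antisymm (le_sInf ?_) (sInf_le ⟨inferInstance, ?_⟩)
  · rintro N ⟨hN, hN_inAbStar⟩
    exact commSupPow_commSupPow_le_of_inAbStar hN_inAbStar
  · exact inAbStar_quotient_commSupPow hp.ne_zero (by omega)

/-- `L_{n,p,d}` is the intersection of all normal subgroups `N` of `F_n` such that
`F_n / N` lies in `Ab(p) ∗ Ab(d)`. -/
theorem stmt_2 (p d n : ℕ) (hp : p.Prime) (hp2 : 2 < p) (hd : 1 < d)
    (hdvd : d ∣ p - 1) (hn : 1 ≤ n) :
    Lgen n p d = sInf {N : Subgroup (FreeGroup (Fin n)) |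
      ∃ hN : N.Normal, letI := hN; InAbStar p d (FreeGroup (Fin n) ⧸ N)} :=
  stmt_2_general p d n hp hd
end

section
/- Let p > 2 be a prime and let d > 1 be a divisor of p-1. Let q and r be units of ℤ/pℤ, each of multiplicative order exactly d. Let φ_q : ℤ/dℤ → Aut(ℤ/pℤ) be the homomorphism sending the class of 1 to the automorphism given by multiplication by q (well defined since q^d = 1), and define φ_r analogously. Then the semidirect products (ℤ/pℤ) ⋊_{φ_q} (ℤ/dℤ) and (ℤ/pℤ) ⋊_{φ_r} (ℤ/dℤ) are isomorphic as groups. -/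
open Subgroup Multiplicative

def sdpCongr {N H : Type*} [Group N] [Group H] (φ φ' : H →* MulAut N) (e : H ≃* H)
    (hc : ∀ g : H, φ' g = φ (e g)) :
    SemidirectProduct N H φ' ≃* SemidirectProduct N H φ where
  toFun x := ⟨x.1, e x.2⟩
  invFun x := ⟨x.1, e.symm x.2⟩
  left_inv x := by ext <;> simp
  right_inv x := by ext <;> simp
  map_mul' x y := by
    ext
    · simp [hc]
    · simp

lemma mem_zpowers_of_orderOf_eq {G : Type*} [Group G] [Fintype G] [IsCyclic G]
    {q r : G} {d : ℕ} (hd : 0 < d) (hq : orderOf q = d) (hr : orderOf r = d) :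
    r ∈ Subgroup.zpowers q := by
  classical
  set T : Finset G := (Subgroup.zpowers q : Set G).toFinset with hT
  set S : Finset G := ({a : G | a ^ d = 1} : Finset G) with hS
  have hTS : T ⊆ S := by
    intro x hx
    rw [hT, Set.mem_toFinset] at hx
    have : orderOf x ∣ d := hq ▸ orderOf_dvd_of_mem_zpowers hx
    simp only [hS, Finset.mem_filter, Finset.mem_univ, true_and]
    exact orderOf_dvd_iff_pow_eq_one.mp this
  have hcardT : T.card = d := by
    simp only [hT, Set.toFinset_card, SetLike.coe_sort_coe, Fintype.card_zpowers, hq]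
  have hcardS : S.card ≤ d := IsCyclic.card_pow_eq_one_le hd
  have hST : T = S := Finset.eq_of_subset_of_card_le hTS (by rw [hcardT]; exact hcardS)
  have hrS : r ∈ S := by
    simp only [hS, Finset.mem_filter, Finset.mem_univ, true_and]
    exact orderOf_dvd_iff_pow_eq_one.mp (hr ▸ dvd_refl d)
  rw [← hST, hT, Set.mem_toFinset] at hrS
  exact hrS

lemma phi_apply {p d : ℕ}
    (φ : Multiplicative (ZMod d) →* MulAut (Multiplicative (ZMod p))) (q : ZMod p)
    (hφ : ∀ x : ZMod p, φ (Multiplicative.ofAdd (1 : ZMod d)) (Multiplicative.ofAdd x) =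
      Multiplicative.ofAdd (q * x)) (n : ℕ) :
    ∀ y : ZMod p, φ (Multiplicative.ofAdd ((n : ZMod d))) (Multiplicative.ofAdd y) =
      Multiplicative.ofAdd (q ^ n * y) := by
  induction n with
  | zero => intro y; simp
  | succ n ih =>
      intro y
      have h1 : ((n + 1 : ℕ) : ZMod d) = (n : ZMod d) + 1 := by push_cast; ring
      rw [h1, ofAdd_add, map_mul, MulAut.mul_apply, hφ, ih]
      congr 1
      ring

/-- Let `q, r` be units of `ℤ/pℤ` of multiplicative order exactly `d`, and let
`φq, φr : ℤ/dℤ → Aut(ℤ/pℤ)` be the homomorphisms sending the class of `1` to multiplication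
by `q` (resp. `r`); such a homomorphism is uniquely determined by this condition, which is
expressed below as a hypothesis. Then the semidirect products
`(ℤ/pℤ) ⋊_{φq} (ℤ/dℤ)` and `(ℤ/pℤ) ⋊_{φr} (ℤ/dℤ)` are isomorphic. -/
theorem stmt_6 (p d : ℕ) (hp : p.Prime) (hp2 : 2 < p) (hd : 1 < d) (hdvd : d ∣ p - 1)
    (q r : (ZMod p)ˣ) (hq : orderOf q = d) (hr : orderOf r = d)
    (φq φr : Multiplicative (ZMod d) →* MulAut (Multiplicative (ZMod p)))
    (hφq : ∀ x : ZMod p, φq (Multiplicative.ofAdd (1 : ZMod d)) (Multiplicative.ofAdd x) =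
      Multiplicative.ofAdd ((q : ZMod p) * x))
    (hφr : ∀ x : ZMod p, φr (Multiplicative.ofAdd (1 : ZMod d)) (Multiplicative.ofAdd x) =
      Multiplicative.ofAdd ((r : ZMod p) * x)) :
    Nonempty (SemidirectProduct (Multiplicative (ZMod p)) (Multiplicative (ZMod d)) φq ≃*
      SemidirectProduct (Multiplicative (ZMod p)) (Multiplicative (ZMod d)) φr) := by
  haveI : Fact p.Prime := ⟨hp⟩
  haveI : NeZero d := ⟨by omega⟩
  have hd0 : 0 < d := by omega
  have hmem : r ∈ Subgroup.zpowers q := mem_zpowers_of_orderOf_eq hd0 hq hr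
  rw [← mem_powers_iff_mem_zpowers] at hmem
  obtain ⟨k, hk'⟩ := hmem
  have hk : q ^ k = r := hk'
  have hcop : Nat.Coprime k d := by
    have h1 : orderOf (q ^ k) = orderOf q / (orderOf q).gcd k := orderOf_pow q
    rw [hk, hr, hq] at h1
    have hg1 : d.gcd k = 1 := by
      rcases (Nat.div_eq_self.mp h1.symm) with h | h
      · omega
      · exact h
    exact Nat.coprime_comm.mp hg1
  set u : (ZMod d)ˣ := ZMod.unitOfCoprime k hcop with hu
  set e : Multiplicative (ZMod d) ≃* Multiplicative (ZMod d) :=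
    AddEquiv.toMultiplicative (DistribMulAction.toAddAut (ZMod d)ˣ (ZMod d) u) with he
  have hecompute : ∀ x : ZMod d,
      e (Multiplicative.ofAdd x) = Multiplicative.ofAdd ((k : ZMod d) * x) := by
    intro x
    simp [he, hu, AddEquiv.toMultiplicative, Units.smul_def, ZMod.coe_unitOfCoprime]
  have key : ∀ g : Multiplicative (ZMod d), φr g = φq (e g) := by
    intro g
    ext m
    set x : ZMod d := Multiplicative.toAdd g with hx
    set y : ZMod p := Multiplicative.toAdd m with hy
    have hg : g = Multiplicative.ofAdd x := rfl
    have hm : m = Multiplicative.ofAdd y := rfl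
    have hxv : ((x.val : ℕ) : ZMod d) = x := by
      rw [ZMod.natCast_val, ZMod.cast_id]
    have hlhs : φr g m = Multiplicative.ofAdd ((r : ZMod p) ^ x.val * y) := by
      conv_lhs => rw [hg, hm, ← hxv]
      exact phi_apply φr (r : ZMod p) hφr x.val y
    have hkxv : (((((k : ZMod d) * x).val : ℕ)) : ZMod d) = (k : ZMod d) * x := by
      rw [ZMod.natCast_val, ZMod.cast_id]
    have hrhs : φq (e g) m = Multiplicative.ofAdd
        ((q : ZMod p) ^ (((k : ZMod d) * x).val) * y) := by
      conv_lhs => rw [hg, hm, hecompute x, ← hkxv]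
      exact phi_apply φq (q : ZMod p) hφq _ y
    have hpow : (r : ZMod p) ^ x.val = (q : ZMod p) ^ (((k : ZMod d) * x).val) := by
      have hunits : r ^ x.val = q ^ (((k : ZMod d) * x).val) := by
        rw [← hk, ← pow_mul]
        rw [pow_eq_pow_iff_modEq, hq]
        rw [← ZMod.natCast_eq_natCast_iff]
        push_cast
        rw [hkxv, hxv]
      calc (r : ZMod p) ^ x.val = ((r ^ x.val : (ZMod p)ˣ) : ZMod p) := by push_cast; ring
        _ = ((q ^ (((k : ZMod d) * x).val) : (ZMod p)ˣ) : ZMod p) := by rw [hunits]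
        _ = (q : ZMod p) ^ (((k : ZMod d) * x).val) := by push_cast; ring
    rw [hlhs, hrhs, hpow]
  exact ⟨(sdpCongr φq φr e key).symm⟩
end

section
/- Let G be a finite group. Then G embeds into a finite direct product G_{p_1} × … × G_{p_s} for some primes p_1,…,p_s (not necessarily distinct) if and only if G embeds into a group of the form G_{p_1} × … × G_{p_s} × (C_{|G|})^m where p_1,…,p_s are prime divisors of |G| (not necessarily distinct), m ∈ ℕ, and C_{|G|} is the cyclic group of order |G|. -/
/-- The holomorph-type action: a unit `u` of `ZMod p` acts on the additive group `ZMod p`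
(viewed multiplicatively) by multiplication by `u`. -/
def holAction (p : ℕ) : (ZMod p)ˣ →* MulAut (Multiplicative (ZMod p)) where
  toFun u := AddEquiv.toMultiplicative (AddAut.mulLeft u)
  map_one' := by
    ext x
    change Multiplicative.ofAdd (((1 : (ZMod p)ˣ) : ZMod p) * Multiplicative.toAdd x) = x
    simp
  map_mul' u v := by
    ext x
    change Multiplicative.ofAdd (((u * v : (ZMod p)ˣ) : ZMod p) * Multiplicative.toAdd x) =
      Multiplicative.ofAdd ((u : ZMod p) * ((v : ZMod p) * Multiplicative.toAdd x))
    simp [mul_assoc]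

/-- `G_p = (ℤ/pℤ) ⋊ (ℤ/pℤ)ˣ`, the holomorph of the cyclic group of order `p`, with units
acting by multiplication. -/
def Holo (p : ℕ) : Type :=
  SemidirectProduct (Multiplicative (ZMod p)) (ZMod p)ˣ (holAction p)

instance (p : ℕ) : Group (Holo p) :=
  inferInstanceAs (Group (SemidirectProduct _ _ _))

/-!
A factor `G_p` with `p ∤ |G|` sees `G` only through the quotient `G_p → (ℤ/pℤ)ˣ`: its kernel
`C_p` meets the image of `G` trivially, by coprimality of orders. The image of `G` in the cyclic
group `(ℤ/pℤ)ˣ` has order dividing `|G|`, hence embeds in `C_{|G|}`. Conversely, `C_{|G|}`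
embeds in `(ℤ/Qℤ)ˣ ≤ G_Q` for any prime `Q ≡ 1 [MOD |G|]`, and such primes exist by Dirichlet.
-/

theorem Nat.card_multiplicative (α : Type*) : Nat.card (Multiplicative α) = Nat.card α :=
  Nat.card_congr Multiplicative.toAdd

def MulEquiv.piCongrLeft' {ι κ : Type*} (P : ι → Type*) [∀ i, Mul (P i)] (e : ι ≃ κ) :
    (∀ i, P i) ≃* ∀ k, P (e.symm k) :=
  { Equiv.piCongrLeft' P e with map_mul' := fun _ _ => rfl }

def MulEquiv.sumPiEquivProdPi {ι κ : Type*} (P : ι ⊕ κ → Type*) [∀ x, Mul (P x)] :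
    (∀ x, P x) ≃* (∀ i, P (.inl i)) × (∀ j, P (.inr j)) :=
  { Equiv.sumPiEquivProdPi P with map_mul' := fun _ _ => rfl }

theorem SemidirectProduct.eq_one_of_rightHom_eq_one_of_coprime {N H : Type*} [Group N]
    [Group H] {φ : H →* MulAut N} {x : N ⋊[φ] H} (hx : rightHom x = 1)
    (hcop : (orderOf x).Coprime (Nat.card N)) : x = 1 := by
  obtain ⟨a, rfl⟩ : x ∈ (inl : N →* N ⋊[φ] H).range := by rwa [range_inl_eq_ker_rightHom]
  rw [orderOf_injective inl inl_injective] at hcop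
  rw [orderOf_eq_one_iff.mp (hcop.eq_one_of_dvd (orderOf_dvd_natCard a)), map_one]

theorem IsCyclic.exists_monoidHom_injective_of_card_dvd {H K : Type*} [Group H] [CommGroup K]
    [IsCyclic H] [IsCyclic K] [Finite K] (h : Nat.card H ∣ Nat.card K) :
    ∃ f : H →* K, Function.Injective f := by
  have hcard : Nat.card H = Nat.card (powMonoidHom (Nat.card H) : K →* K).ker := by
    rw [IsCyclic.card_powMonoidHom_ker, Nat.gcd_eq_right h]
  exact ⟨(Subgroup.subtype _).comp (mulEquivOfCyclicCardEq hcard).toMonoidHom,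
    Subtype.val_injective.comp (MulEquiv.injective _)⟩

theorem IsCyclic.exists_monoidHom_zmod_card_ker_eq {G H : Type*} [Group G] [Finite G] [Group H]
    [IsCyclic H] (ψ : G →* H) :
    ∃ χ : G →* Multiplicative (ZMod (Nat.card G)), χ.ker = ψ.ker := by
  have : NeZero (Nat.card G) := ⟨Nat.card_pos.ne'⟩
  have hcard : Nat.card ψ.range ∣ Nat.card (Multiplicative (ZMod (Nat.card G))) := by
    rw [Nat.card_multiplicative, Nat.card_zmod]
    exact Subgroup.card_range_dvd ψ
  obtain ⟨ε, hε⟩ := exists_monoidHom_injective_of_card_dvd hcard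
  exact ⟨ε.comp ψ.rangeRestrict,
    by rw [MonoidHom.ker_comp_of_injective _ _ hε, ψ.ker_rangeRestrict]⟩

theorem exists_prime_monoidHom_zmod_units_injective {n : ℕ} (hn : n ≠ 0) :
    ∃ Q : ℕ, Q.Prime ∧ ∃ f : Multiplicative (ZMod n) →* (ZMod Q)ˣ, Function.Injective f := by
  obtain ⟨Q, hQ, -, hQn⟩ := Nat.exists_prime_gt_modEq_one 1 hn
  have : Fact Q.Prime := ⟨hQ⟩
  have : NeZero n := ⟨hn⟩
  refine ⟨Q, hQ, IsCyclic.exists_monoidHom_injective_of_card_dvd ?_⟩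
  rw [Nat.card_multiplicative, Nat.card_zmod, Nat.card_eq_fintype_card, ZMod.card_units]
  exact (Nat.modEq_iff_dvd' hQ.one_le).mp hQn.symm

namespace Holo

def inr (p : ℕ) : (ZMod p)ˣ →* Holo p := SemidirectProduct.inr

def rightHom (p : ℕ) : Holo p →* (ZMod p)ˣ := SemidirectProduct.rightHom

theorem inr_injective (p : ℕ) : Function.Injective (inr p) :=
  SemidirectProduct.inr_injective

theorem ker_rightHom_comp {G : Type*} [Group G] {p : ℕ} (hp : p.Prime) (φ : G →* Holo p)
    (hpG : ¬ p ∣ Nat.card G) : ((rightHom p).comp φ).ker = φ.ker := by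
  refine le_antisymm (fun g hg => ?_) fun g (hg : φ g = 1) => by
    change rightHom p (φ g) = 1
    rw [hg, map_one]
  refine SemidirectProduct.eq_one_of_rightHom_eq_one_of_coprime hg ?_
  rw [Nat.card_multiplicative, Nat.card_zmod, Nat.coprime_comm, hp.coprime_iff_not_dvd]
  exact fun h => hpG (h.trans ((orderOf_map_dvd φ g).trans (orderOf_dvd_natCard g)))

theorem exists_injective_pi_dvd_card_prod_zmod {G ι : Type*} [Group G] [Finite G] (p : ι → ℕ)
    (hp : ∀ i, (p i).Prime) (f : G →* ∀ i, Holo (p i)) (hf : Function.Injective f) :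
    ∃ F : G →* (∀ k : {i // p i ∣ Nat.card G}, Holo (p k)) ×
      (ι → Multiplicative (ZMod (Nat.card G))), Function.Injective F := by
  have (i : ι) : Fact (p i).Prime := ⟨hp i⟩
  choose χ hχ using fun i => IsCyclic.exists_monoidHom_zmod_card_ker_eq
    ((rightHom (p i)).comp ((Pi.evalMonoidHom _ i).comp f))
  refine ⟨(MonoidHom.pi fun k => (Pi.evalMonoidHom _ k.1).comp f).prod (MonoidHom.pi χ), ?_⟩
  rw [injective_iff_map_eq_one]
  intro g hg
  simp only [MonoidHom.prod_apply, Prod.mk_eq_one, funext_iff, MonoidHom.pi_apply] at hg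
  refine (injective_iff_map_eq_one f).mp hf g (funext fun i => ?_)
  by_cases hpi : p i ∣ Nat.card G
  · exact hg.1 ⟨i, hpi⟩
  · have hg' : g ∈ (χ i).ker := hg.2 i
    rwa [hχ i, ker_rightHom_comp (hp i) _ hpi] at hg'

theorem exists_prime_injective_pi_sum {G ι κ : Type*} [Group G] {n : ℕ} (hn : n ≠ 0)
    (p : ι → ℕ) (f : G →* (∀ i, Holo (p i)) × (κ → Multiplicative (ZMod n)))
    (hf : Function.Injective f) :
    ∃ Q : ℕ, Q.Prime ∧ ∃ F : G →* ∀ x : ι ⊕ κ, Holo (Sum.elim p (fun _ => Q) x),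
      Function.Injective F := by
  obtain ⟨Q, hQ, ε, hε⟩ := exists_prime_monoidHom_zmod_units_injective hn
  let E := (MulEquiv.sumPiEquivProdPi fun x : ι ⊕ κ => Holo (Sum.elim p (fun _ => Q) x)).symm
  let embedCyclic := ((inr Q).comp ε).compLeft κ
  exact ⟨Q, hQ, E.toMonoidHom.comp (((MonoidHom.id _).prodMap embedCyclic).comp f),
    E.injective.comp
      ((Function.injective_id.prodMap ((inr_injective Q).comp hε).comp_left).comp hf)⟩

end Holo

/-- A finite group `G` embeds into a finite direct product `G_{p₁} × … × G_{p_s}` for some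
primes `pᵢ` if and only if it embeds into a group of the form
`G_{p₁} × … × G_{p_s} × (C_{|G|})^m` where the `pᵢ` are prime divisors of `|G|` and
`C_{|G|}` is the cyclic group of order `|G|`. -/
theorem stmt_11 (G : Type) [Group G] [Finite G] :
    (∃ (s : ℕ) (ps : Fin s → ℕ), (∀ i, (ps i).Prime) ∧
      ∃ f : G →* (∀ i, Holo (ps i)), Function.Injective f) ↔
    (∃ (s : ℕ) (ps : Fin s → ℕ), (∀ i, (ps i).Prime ∧ ps i ∣ Nat.card G) ∧
      ∃ (m : ℕ) (f : G →* (∀ i, Holo (ps i)) × (Fin m → Multiplicative (ZMod (Nat.card G)))),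
        Function.Injective f) := by
  constructor
  · rintro ⟨s, ps, hps, f, hf⟩
    obtain ⟨F, hF⟩ := Holo.exists_injective_pi_dvd_card_prod_zmod ps hps f hf
    obtain ⟨s', ⟨e⟩⟩ := Finite.exists_equiv_fin {i // ps i ∣ Nat.card G}
    exact ⟨s', fun j => ps (e.symm j), fun j => ⟨hps _, (e.symm j).2⟩, s,
      ((MulEquiv.piCongrLeft' _ e).toMonoidHom.prodMap (MonoidHom.id _)).comp F,
      ((MulEquiv.injective _).prodMap Function.injective_id).comp hF⟩
  · rintro ⟨s, ps, hps, m, f, hf⟩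
    obtain ⟨Q, hQ, F, hF⟩ := Holo.exists_prime_injective_pi_sum Nat.card_pos.ne' ps f hf
    have hprime : ∀ x : Fin s ⊕ Fin m, (Sum.elim ps (fun _ => Q) x).Prime :=
      Sum.forall.2 ⟨fun i => (hps i).1, fun _ => hQ⟩
    exact ⟨s + m, fun k => Sum.elim ps (fun _ => Q) (finSumFinEquiv.symm k), fun k => hprime _,
      (MulEquiv.piCongrLeft' _ finSumFinEquiv).toMonoidHom.comp F, (MulEquiv.injective _).comp hF⟩
end

section
/- Let n ≥ 1, fix a basis {a_1,…,a_n} of the free group F_n, let j ∈ {1,…,n}, and let π_j : F_n → ℤ be the homomorphism sending a_j to 1 and a_i to 0 for i ≠ j. Then for every prime p, the image π_j(L_{n,p,p-1}) equals the subgroup p(p-1)ℤ of ℤ. -/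
/-- `π_j : F_n → ℤ` is the homomorphism sending the generator `a_j` to `1` and all other
generators to `0` (with `ℤ` written multiplicatively). -/
def proj (n : ℕ) (j : Fin n) : FreeGroup (Fin n) →* Multiplicative ℤ :=
  FreeGroup.lift fun i => Multiplicative.ofAdd (if i = j then (1 : ℤ) else 0)

lemma map_subgroupPow {G H : Type*} [Group G] [Group H] (f : G →* H) (m : ℕ) (K : Subgroup G) :
    (subgroupPow m K).map f = subgroupPow m (K.map f) := by
  unfold subgroupPow
  rw [MonoidHom.map_closure]
  congr 1
  ext x
  constructor
  · rintro ⟨y, ⟨u, hu, rfl⟩, rfl⟩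
    exact ⟨f u, ⟨u, hu, rfl⟩, (map_pow f u m).symm⟩
  · rintro ⟨v, ⟨u, hu, rfl⟩, rfl⟩
    exact ⟨u ^ m, ⟨u, hu, rfl⟩, map_pow f u m⟩

lemma subgroupPow_zpowers {G : Type*} [CommGroup G] (m : ℕ) (g : G) :
    subgroupPow m (Subgroup.zpowers g) = Subgroup.zpowers (g ^ m) := by
  unfold subgroupPow
  have h : {x | ∃ u ∈ Subgroup.zpowers g, u ^ m = x} = (Subgroup.zpowers (g ^ m) : Set G) := by
    ext x
    simp only [Set.mem_setOf_eq, SetLike.mem_coe, Subgroup.mem_zpowers_iff]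
    constructor
    · rintro ⟨u, ⟨k, rfl⟩, rfl⟩
      exact ⟨k, by group⟩
    · rintro ⟨k, rfl⟩
      exact ⟨g ^ k, ⟨k, rfl⟩, by group⟩
  rw [h, Subgroup.closure_eq]

lemma proj_surjective (n : ℕ) (j : Fin n) : Function.Surjective (proj n j) := by
  intro x
  refine ⟨FreeGroup.of j ^ (Multiplicative.toAdd x), ?_⟩
  rw [map_zpow]
  have : proj n j (FreeGroup.of j) = Multiplicative.ofAdd 1 := by
    simp [proj]
  rw [this, ← ofAdd_zsmul]
  simp

lemma map_top_eq (n : ℕ) (j : Fin n) :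
    Subgroup.map (proj n j) ⊤ = Subgroup.zpowers (Multiplicative.ofAdd (1 : ℤ)) := by
  rw [Subgroup.map_top_of_surjective _ (proj_surjective n j)]
  ext x
  simp only [Subgroup.mem_top, true_iff, Subgroup.mem_zpowers_iff]
  refine ⟨Multiplicative.toAdd x, ?_⟩
  rw [← ofAdd_zsmul]
  simp

lemma commutator_top_abelian {G : Type*} [CommGroup G] (H K : Subgroup G) :
    ⁅H, K⁆ = ⊥ := by
  rw [Subgroup.commutator_def, Subgroup.closure_eq_bot_iff]
  rintro x ⟨a, _, b, _, rfl⟩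
  simp [commutatorElement_def, mul_comm]

lemma map_Kgen (n m : ℕ) (j : Fin n) :
    Subgroup.map (proj n j) (Kgen n m) =
      Subgroup.zpowers (Multiplicative.ofAdd (m : ℤ)) := by
  unfold Kgen
  rw [Subgroup.map_sup, Subgroup.map_commutator, map_subgroupPow, map_top_eq,
    commutator_top_abelian, bot_sup_eq, subgroupPow_zpowers]
  congr 1
  rw [← ofAdd_nsmul]
  simp

/-- For every prime `p`, the image `π_j(L_{n,p,p-1})` equals the subgroup `p(p-1)ℤ` of `ℤ`
(written multiplicatively, the cyclic subgroup generated by `p(p-1)`). -/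
theorem stmt_19 (n : ℕ) (hn : 1 ≤ n) (j : Fin n) (p : ℕ) (hp : p.Prime) :
    Subgroup.map (proj n j) (Lgen n p (p - 1)) =
      Subgroup.zpowers (Multiplicative.ofAdd ((p * (p - 1) : ℕ) : ℤ)) := by
  unfold Lgen
  rw [Subgroup.map_sup, Subgroup.map_commutator, map_subgroupPow, map_Kgen,
    commutator_top_abelian, bot_sup_eq, subgroupPow_zpowers]
  congr 1
end
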